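/- arXiv:2404.09915 — 3 statements merged into one kernel-verified Lean document; each statement's English description precedes it below -/
import Mathlib

section
/- Let T = diag(1, e^{iπ/4}) be the T gate, CS = diag(1,1,1,i) the controlled-S gate, CNOT the 4×4 controlled-NOT with the first qubit as control, and let τ = (1/√2)(e₀ + e^{iπ/4} e₁) ∈ ℂ² be the magic state |T⟩. Then for every vector v ∈ ℂ², (CS · CNOT) applied (by matrix–vector multiplication) to v ⊗ τ equals (T v) ⊗ τ. In other words, a single CS gate together with one CNOT catalytically applies a T gate using the catalyst |T⟩. -/
/- STATEMENT 0: A single CS gate together with one CNOT catalytically applies a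
T gate using the catalyst |T⟩ = (1/√2)(e₀ + e^{iπ/4} e₁). -/

open Complex Matrix

noncomputable section

/-- The T gate `diag(1, e^{iπ/4})`. -/
def Tgate : Matrix (Fin 2) (Fin 2) ℂ :=
  !![1, 0; 0, Complex.exp (Real.pi * Complex.I / 4)]

/-- The controlled-S gate `diag(1, 1, 1, i)`. -/
def CS : Matrix (Fin 4) (Fin 4) ℂ :=
  !![1, 0, 0, 0; 0, 1, 0, 0; 0, 0, 1, 0; 0, 0, 0, Complex.I]

/-- The CNOT gate with the first qubit as control: `|2i+j⟩ ↦ |2i+(j⊕i)⟩`. -/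
def CNOT : Matrix (Fin 4) (Fin 4) ℂ :=
  !![1, 0, 0, 0; 0, 1, 0, 0; 0, 0, 0, 1; 0, 0, 1, 0]

/-- Kronecker product of two vectors in ℂ²: `(v ⊗ w)(2i+j) = v(i)·w(j)`. -/
def kron (v w : Fin 2 → ℂ) : Fin 4 → ℂ :=
  fun k => v ⟨k.val / 2, by have := k.isLt; omega⟩ * w ⟨k.val % 2, by omega⟩

/-- The magic state `|T⟩ = (1/√2)(e₀ + e^{iπ/4} e₁)`. -/
def tau : Fin 2 → ℂ :=
  fun i => (1 / Real.sqrt 2) * (if i = 0 then 1 else Complex.exp (Real.pi * Complex.I / 4))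

theorem cs_catalyses_T (v : Fin 2 → ℂ) :
    (CS * CNOT).mulVec (kron v tau) = kron (Tgate.mulVec v) tau := by
  have hsq : Complex.exp (Real.pi * Complex.I / 4) * Complex.exp (Real.pi * Complex.I / 4)
      = Complex.I := by
    rw [← Complex.exp_add]
    have : (Real.pi : ℂ) * Complex.I / 4 + Real.pi * Complex.I / 4
        = Real.pi * Complex.I / 2 := by ring
    rw [this, show (Real.pi : ℂ) * Complex.I / 2 = (Real.pi/2 : ℝ) * Complex.I by push_cast; ring,
      Complex.exp_mul_I]
    simp
  have hsq' : Complex.exp (Complex.I * Real.pi * (1/4)) ^ 2 = Complex.I := by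
    rw [sq, show Complex.I * (Real.pi:ℂ) * (1/4) = Real.pi * Complex.I / 4 by ring]; exact hsq
  funext k
  fin_cases k <;>
    simp [CS, CNOT, Tgate, kron, tau, mulVec, dotProduct, Fin.sum_univ_succ,
      Matrix.mul_apply] <;> ring_nf <;> simp only [hsq'] <;> ring_nf
end
end

section
/- Let d, m be positive integers, let U and O be d×d complex matrices, let V be a (d·m)×(d·m) complex matrix, and let c ∈ ℂ^m be a unit vector such that V(ψ ⊗ c) = (Uψ) ⊗ c for every ψ ∈ ℂ^d. Suppose furthermore that the projector |c⟩⟨c| decomposes as a finite real combination |c⟩⟨c| = Σⱼ λⱼ |ψⱼ⟩⟨ψⱼ| with λⱼ ∈ ℝ and ψⱼ ∈ ℂ^m. Then for every ψ ∈ ℂ^d, ⟨Uψ, O(Uψ)⟩ = Σⱼ λⱼ · ⟨V(ψ ⊗ ψⱼ), (O ⊗ I_m) V(ψ ⊗ ψⱼ)⟩. That is, the expectation value of O for the circuit U can be computed as a weighted sum of expectation values of O ⊗ I for the catalytic circuit V run on the inputs ψ ⊗ ψⱼ. -/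
/- STATEMENT 6: If the catalyst projector |c⟩⟨c| decomposes as a finite real
combination Σⱼ λⱼ |ψⱼ⟩⟨ψⱼ|, then the expectation value of O for the circuit U
is the correspondingly weighted sum of expectation values of O ⊗ I for the
catalytic circuit V run on the inputs ψ ⊗ ψⱼ. -/

open Complex Matrix Kronecker

noncomputable section

/-- The inner product `⟨u,v⟩ = Σᵢ conj(u(i))·v(i)`, conjugate-linear in the
first argument. -/
def inn {ι : Type*} [Fintype ι] (u v : ι → ℂ) : ℂ :=
  ∑ i, (starRingEnd ℂ) (u i) * v i

/-- The tensor product of vectors: `(ψ ⊗ c)(i,j) = ψ(i)·c(j)`. -/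
def tens {d m : ℕ} (ψ : Fin d → ℂ) (c : Fin m → ℂ) : Fin d × Fin m → ℂ :=
  fun p => ψ p.1 * c p.2

/-- The projector `|u⟩⟨u|` with entries `u(i)·conj(u(j))`. -/
def proj {m : ℕ} (u : Fin m → ℂ) : Matrix (Fin m) (Fin m) ℂ :=
  Matrix.of fun i j => u i * (starRingEnd ℂ) (u j)

/- Both sides are values of the linear functional `A ↦ tr (B (|ψ⟩⟨ψ| ⊗ A))`, with
`B = V† (O ⊗ I) V`: at `A = |c⟩⟨c|` and at the `|ψⱼ⟩⟨ψⱼ|`. Indeed `⟨x, B x⟩ = tr (B |x⟩⟨x|)` and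
`|ψ ⊗ u⟩⟨ψ ⊗ u| = |ψ⟩⟨ψ| ⊗ |u⟩⟨u|`, while for `u = c` the catalytic property of `V` and
`⟨c, c⟩ = 1` turn `⟨V(ψ ⊗ c), (O ⊗ I) V(ψ ⊗ c)⟩` into `⟨Uψ, O Uψ⟩`. -/

section Inner

variable {ι : Type*} [Fintype ι]

theorem inn_eq_star_dotProduct (u v : ι → ℂ) : inn u v = star u ⬝ᵥ v := rfl

theorem inn_mulVec_left (A : Matrix ι ι ℂ) (x y : ι → ℂ) :
    inn (A *ᵥ x) y = inn x (Aᴴ *ᵥ y) := by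
  rw [inn_eq_star_dotProduct, inn_eq_star_dotProduct, star_mulVec, dotProduct_mulVec]

theorem inn_mulVec_conj (V A : Matrix ι ι ℂ) (x : ι → ℂ) :
    inn (V *ᵥ x) (A *ᵥ V *ᵥ x) = inn x ((Vᴴ * A * V) *ᵥ x) := by
  rw [inn_mulVec_left, mulVec_mulVec, mulVec_mulVec, Matrix.mul_assoc]

theorem inn_mulVec_self_eq_trace (B : Matrix ι ι ℂ) (x : ι → ℂ) :
    inn x (B *ᵥ x) = trace (B * vecMulVec x (star x)) := by
  rw [mul_vecMulVec, trace_vecMulVec, dotProduct_comm, inn_eq_star_dotProduct]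

end Inner

theorem proj_eq_vecMulVec {m : ℕ} (u : Fin m → ℂ) : proj u = vecMulVec u (star u) := rfl

section Tensor

variable {d m : ℕ}

theorem star_tens (a : Fin d → ℂ) (b : Fin m → ℂ) : star (tens a b) = tens (star a) (star b) := by
  ext p
  simp [tens]

theorem vecMulVec_tens (a a' : Fin d → ℂ) (b b' : Fin m → ℂ) :
    vecMulVec (tens a b) (tens a' b') = vecMulVec a a' ⊗ₖ vecMulVec b b' := by
  ext p q
  simp only [vecMulVec_apply, tens, kroneckerMap_apply]
  ring

theorem inn_tens_tens (a b : Fin d → ℂ) (c : Fin m → ℂ) :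
    inn (tens a c) (tens b c) = inn a b * inn c c := by
  simp only [inn, tens, Fintype.sum_prod_type, map_mul, Finset.sum_mul_sum]
  refine Finset.sum_congr rfl fun i _ => Finset.sum_congr rfl fun j _ => ?_
  ring

theorem kronecker_one_mulVec_tens (O : Matrix (Fin d) (Fin d) ℂ) (a : Fin d → ℂ)
    (c : Fin m → ℂ) : (O ⊗ₖ (1 : Matrix (Fin m) (Fin m) ℂ)) *ᵥ tens a c = tens (O *ᵥ a) c := by
  ext p
  simp [mulVec, dotProduct, tens, Fintype.sum_prod_type, one_apply, Finset.sum_mul, mul_assoc]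

end Tensor

theorem trace_mul_kronecker_sum_smul {ι κ n : Type*} [Fintype κ] [Fintype n]
    (B : Matrix (κ × n) (κ × n) ℂ) (P : Matrix κ κ ℂ) (s : Finset ι)
    (a : ι → ℂ) (A : ι → Matrix n n ℂ) :
    trace (B * (P ⊗ₖ ∑ j ∈ s, a j • A j)) = ∑ j ∈ s, a j * trace (B * (P ⊗ₖ A j)) := by
  have hsum : P ⊗ₖ ∑ j ∈ s, a j • A j = ∑ j ∈ s, a j • (P ⊗ₖ A j) :=
    (map_sum (kroneckerBilinear (R := ℂ) P) _ s).trans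
      (Finset.sum_congr rfl fun j _ => map_smul _ _ _)
  simp [hsum, Matrix.mul_sum, trace_sum]

theorem catalytic_expectation_sum_general (d m : ℕ)
    (U O : Matrix (Fin d) (Fin d) ℂ)
    (V : Matrix (Fin d × Fin m) (Fin d × Fin m) ℂ)
    (c : Fin m → ℂ) (hc : inn c c = 1)
    (hV : ∀ ψ : Fin d → ℂ, V.mulVec (tens ψ c) = tens (U.mulVec ψ) c)
    (k : ℕ) (lam : Fin k → ℝ) (ψs : Fin k → Fin m → ℂ)
    (hdecomp : proj c = ∑ j, ((lam j : ℂ) • proj (ψs j))) :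
    ∀ ψ : Fin d → ℂ,
      inn (U.mulVec ψ) (O.mulVec (U.mulVec ψ))
        = ∑ j, (lam j : ℂ) *
            inn (V.mulVec (tens ψ (ψs j)))
              ((O ⊗ₖ (1 : Matrix (Fin m) (Fin m) ℂ)).mulVec (V.mulVec (tens ψ (ψs j)))) := by
  intro ψ
  set B := Vᴴ * (O ⊗ₖ (1 : Matrix (Fin m) (Fin m) ℂ)) * V
  have expectation_eq_trace : ∀ u : Fin m → ℂ,
      inn (V *ᵥ tens ψ u) ((O ⊗ₖ (1 : Matrix (Fin m) (Fin m) ℂ)) *ᵥ V *ᵥ tens ψ u)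
        = trace (B * (vecMulVec ψ (star ψ) ⊗ₖ proj u)) := fun u => by
    rw [inn_mulVec_conj, inn_mulVec_self_eq_trace, star_tens, vecMulVec_tens, proj_eq_vecMulVec]
  calc inn (U *ᵥ ψ) (O *ᵥ U *ᵥ ψ)
      = inn (V *ᵥ tens ψ c) ((O ⊗ₖ (1 : Matrix (Fin m) (Fin m) ℂ)) *ᵥ V *ᵥ tens ψ c) := by
        rw [hV, kronecker_one_mulVec_tens, inn_tens_tens, hc, mul_one]
    _ = ∑ j, (lam j : ℂ) * trace (B * (vecMulVec ψ (star ψ) ⊗ₖ proj (ψs j))) := by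
        rw [expectation_eq_trace, hdecomp, trace_mul_kronecker_sum_smul]
    _ = _ := by simp only [expectation_eq_trace]

theorem catalytic_expectation_sum (d m : ℕ) (hd : 0 < d) (hm : 0 < m)
    (U O : Matrix (Fin d) (Fin d) ℂ)
    (V : Matrix (Fin d × Fin m) (Fin d × Fin m) ℂ)
    (c : Fin m → ℂ) (hc : inn c c = 1)
    (hV : ∀ ψ : Fin d → ℂ, V.mulVec (tens ψ c) = tens (U.mulVec ψ) c)
    (k : ℕ) (lam : Fin k → ℝ) (ψs : Fin k → Fin m → ℂ)
    (hdecomp : proj c = ∑ j, ((lam j : ℂ) • proj (ψs j))) :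
    ∀ ψ : Fin d → ℂ,
      inn (U.mulVec ψ) (O.mulVec (U.mulVec ψ))
        = ∑ j, (lam j : ℂ) *
            inn (V.mulVec (tens ψ (ψs j)))
              ((O ⊗ₖ (1 : Matrix (Fin m) (Fin m) ℂ)).mulVec (V.mulVec (tens ψ (ψs j)))) :=
  catalytic_expectation_sum_general d m U O V c hc hV k lam ψs hdecomp

end
end

section
/- Let d be a positive integer, let C be a d×d complex matrix with real encoding C̃ = fromBlocks(Re(C), −Im(C), Im(C), Re(C)), and let ψ, ψ' ∈ ℂ^d be vectors all of whose entries are real. Let u be the block vector on Fin d ⊕ Fin d with top block ψ' and bottom block 0 (i.e. u = |0⟩ ⊗ ψ'). Then the marginal over the encoding qubit reproduces the original transition probability: |⟨w₀, C̃ u⟩|² + |⟨w₁, C̃ u⟩|² = |⟨ψ, C ψ'⟩|², where w₀ is the block vector with top block ψ and bottom block 0, and w₁ is the block vector with top block 0 and bottom block ψ. -/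
/-! For real `ψ, ψ'` the split `C = Re C + i · Im C` gives
`⟨ψ, C ψ'⟩ = ⟨ψ, Re C ψ'⟩ + i ⟨ψ, Im C ψ'⟩` with both brackets real, while the first block
column of `C̃` sends `|0⟩ ⊗ ψ'` to `(Re C ψ', Im C ψ')`, so the two block amplitudes are exactly
these real and imaginary parts. -/

open Complex Matrix

noncomputable section

/-- Entrywise real part of a complex matrix, viewed as a complex matrix. -/
def reM {d : ℕ} (C : Matrix (Fin d) (Fin d) ℂ) : Matrix (Fin d) (Fin d) ℂ :=
  Matrix.of fun i j => ((C i j).re : ℂ)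

/-- Entrywise imaginary part of a complex matrix, viewed as a complex matrix. -/
def imM {d : ℕ} (C : Matrix (Fin d) (Fin d) ℂ) : Matrix (Fin d) (Fin d) ℂ :=
  Matrix.of fun i j => ((C i j).im : ℂ)

/-- The real encoding `C̃ = fromBlocks(Re C, −Im C, Im C, Re C)`. -/
def enc {d : ℕ} (C : Matrix (Fin d) (Fin d) ℂ) :
    Matrix (Fin d ⊕ Fin d) (Fin d ⊕ Fin d) ℂ :=
  Matrix.fromBlocks (reM C) (-imM C) (imM C) (reM C)

theorem inn_sum_elim {ι κ : Type*} [Fintype ι] [Fintype κ] (u₁ v₁ : ι → ℂ) (u₂ v₂ : κ → ℂ) :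
    inn (Sum.elim u₁ u₂) (Sum.elim v₁ v₂) = inn u₁ v₁ + inn u₂ v₂ := by
  simp only [inn, Fintype.sum_sum_type, Sum.elim_inl, Sum.elim_inr]

theorem inn_zero_left {ι : Type*} [Fintype ι] (v : ι → ℂ) : inn (fun _ => 0) v = 0 := by
  simp [inn]

theorem inn_add_right {ι : Type*} [Fintype ι] (u v w : ι → ℂ) :
    inn u (v + w) = inn u v + inn u w := by
  simp only [inn, Pi.add_apply, mul_add, Finset.sum_add_distrib]

theorem inn_smul_right {ι : Type*} [Fintype ι] (c : ℂ) (u v : ι → ℂ) :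
    inn u (c • v) = c * inn u v := by
  simp only [inn, Pi.smul_apply, smul_eq_mul, Finset.mul_sum]
  exact Finset.sum_congr rfl fun _ _ => by ring

theorem inn_ofReal_mulVec {ι κ : Type*} [Fintype ι] [Fintype κ] (x : ι → ℝ) (M : Matrix ι κ ℝ)
    (y : κ → ℝ) :
    inn (fun i => (x i : ℂ)) (M.map ofReal *ᵥ fun j => (y j : ℂ)) = ((x ⬝ᵥ M *ᵥ y : ℝ) : ℂ) := by
  rw [← ofRealHom_eq_coe, RingHom.map_dotProduct]
  simp only [inn, dotProduct, Function.comp_apply, conj_ofReal, RingHom.map_mulVec]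
  rfl

theorem sq_norm_ofReal_add_ofReal_mul_I (x y : ℝ) :
    ‖(x + y * I : ℂ)‖ ^ 2 = ‖(x : ℂ)‖ ^ 2 + ‖(y : ℂ)‖ ^ 2 := by
  rw [Complex.sq_norm, Complex.sq_norm, Complex.sq_norm, normSq_add_mul_I, normSq_ofReal,
    normSq_ofReal, sq, sq]

theorem eq_ofReal_re_of_im_eq_zero {ι : Type*} {v : ι → ℂ} (hv : ∀ i, (v i).im = 0) :
    v = fun i => ((v i).re : ℂ) :=
  funext fun i => ext (ofReal_re _).symm ((hv i).trans (ofReal_im _).symm)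

section

variable {d : ℕ} (C : Matrix (Fin d) (Fin d) ℂ)

theorem reM_eq_map : reM C = (C.map re).map ofReal := rfl

theorem imM_eq_map : imM C = (C.map im).map ofReal := rfl

theorem reM_add_I_smul_imM : reM C + I • imM C = C := by
  ext i j
  simp [reM, imM, mul_comm I, re_add_im]

theorem inn_mulVec_eq_reM_add_imM (u v : Fin d → ℂ) :
    inn u (C *ᵥ v) = inn u (reM C *ᵥ v) + inn u (imM C *ᵥ v) * I := by
  conv_lhs => rw [← reM_add_I_smul_imM C]
  rw [add_mulVec, smul_mulVec, inn_add_right, inn_smul_right, mul_comm]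

theorem enc_mulVec_sum_elim_zero (v : Fin d → ℂ) :
    enc C *ᵥ Sum.elim v (fun _ => 0) = Sum.elim (reM C *ᵥ v) (imM C *ᵥ v) := by
  rw [enc, fromBlocks_mulVec]
  congr 1 <;> ext i <;> simp [mulVec, dotProduct]

end

theorem encoding_marginal_probability_general (d : ℕ)
    (C : Matrix (Fin d) (Fin d) ℂ) (ψ ψ' : Fin d → ℂ)
    (hψ : ∀ i, (ψ i).im = 0) (hψ' : ∀ i, (ψ' i).im = 0) :
    ‖inn (Sum.elim ψ (fun _ => 0)) ((enc C).mulVec (Sum.elim ψ' fun _ => 0))‖ ^ 2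
      + ‖inn (Sum.elim (fun _ => 0) ψ) ((enc C).mulVec (Sum.elim ψ' fun _ => 0))‖ ^ 2
      = ‖inn ψ (C.mulVec ψ')‖ ^ 2 := by
  rw [enc_mulVec_sum_elim_zero, inn_sum_elim, inn_sum_elim, inn_zero_left, inn_zero_left,
    add_zero, zero_add, inn_mulVec_eq_reM_add_imM C]
  obtain ⟨x, rfl⟩ : ∃ x : Fin d → ℝ, ψ = fun i => (x i : ℂ) :=
    ⟨_, eq_ofReal_re_of_im_eq_zero hψ⟩
  obtain ⟨y, rfl⟩ : ∃ y : Fin d → ℝ, ψ' = fun i => (y i : ℂ) :=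
    ⟨_, eq_ofReal_re_of_im_eq_zero hψ'⟩
  rw [reM_eq_map, imM_eq_map, inn_ofReal_mulVec, inn_ofReal_mulVec,
    sq_norm_ofReal_add_ofReal_mul_I]

theorem encoding_marginal_probability (d : ℕ) (hd : 0 < d)
    (C : Matrix (Fin d) (Fin d) ℂ) (ψ ψ' : Fin d → ℂ)
    (hψ : ∀ i, (ψ i).im = 0) (hψ' : ∀ i, (ψ' i).im = 0) :
    ‖inn (Sum.elim ψ (fun _ => 0)) ((enc C).mulVec (Sum.elim ψ' fun _ => 0))‖ ^ 2
      + ‖inn (Sum.elim (fun _ => 0) ψ) ((enc C).mulVec (Sum.elim ψ' fun _ => 0))‖ ^ 2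
      = ‖inn ψ (C.mulVec ψ')‖ ^ 2 :=
  encoding_marginal_probability_general d C ψ ψ' hψ hψ'

end
end
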